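/- arXiv:1803.06907 — 4 statements merged into one kernel-verified Lean document; each statement's English description precedes it below -/
import Mathlib

section
/- With the notation of the previous setting, among all probability measures R supported on S = {x1,...,xn} satisfying R(Aj) = P(Aj) for all j = 1,...,m, the measure Q' defined by Q'({x}) = Q({x})·P(Aj)/Q(Aj) for x ∈ Aj minimizes the relative entropy d_K(Q || R); i.e. for every such R, d_K(Q || R) ≥ d_K(Q || Q') = Σ_j Q(Aj) log(Q(Aj)/P(Aj)). -/
/-!
Rewriting `log (q x / Q'(x))` as `log (Q(A_j) / P(A_j))` turns `d_K(Q ‖ Q')` into the stated sum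
over the blocks. For any admissible `R`, the log-sum inequality (Jensen for `x ↦ x log x`) on each
block `A_j` gives `Q(A_j) log (Q(A_j) / R(A_j)) ≤ ∑_{x ∈ A_j} q x log (q x / r x)`, and the margin
constraint `R(A_j) = P(A_j)` identifies the left side with the `j`-th term of `d_K(Q ‖ Q')`.
-/

open scoped Classical

open Finset Real

theorem sum_mul_log_sum_div_sum_le {ι : Type*} (t : Finset ι) {a b : ι → ℝ}
    (ha : ∀ i ∈ t, 0 ≤ a i) (hb : ∀ i ∈ t, 0 < b i) :
    (∑ i ∈ t, a i) * log ((∑ i ∈ t, a i) / ∑ i ∈ t, b i)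
      ≤ ∑ i ∈ t, a i * log (a i / b i) := by
  rcases t.eq_empty_or_nonempty with rfl | ht
  · simp
  set A := ∑ i ∈ t, a i
  set B := ∑ i ∈ t, b i
  have hB : 0 < B := sum_pos hb ht
  have jensen := convexOn_mul_log.map_sum_le (t := t) (w := fun i => b i / B)
    (p := fun i => a i / b i) (fun i hi => (div_pos (hb i hi) hB).le)
    (by rw [← sum_div, div_self hB.ne']) (fun i hi => div_nonneg (ha i hi) (hb i hi).le)
  have hmean : ∑ i ∈ t, (b i / B) • (a i / b i) = A / B := by
    rw [sum_div]
    refine sum_congr rfl fun i hi => ?_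
    simp only [smul_eq_mul]
    field_simp [(hb i hi).ne']
  have hweighted : ∑ i ∈ t, (b i / B) • (a i / b i * log (a i / b i))
      = (∑ i ∈ t, a i * log (a i / b i)) / B := by
    rw [sum_div]
    refine sum_congr rfl fun i hi => ?_
    simp only [smul_eq_mul]
    field_simp [(hb i hi).ne']
  rw [hmean, hweighted, le_div_iff₀ hB] at jensen
  calc A * log (A / B) = A / B * log (A / B) * B := by field_simp
    _ ≤ _ := jensen

theorem sum_mul_comp_eq_sum_fiber_mul {ι κ : Type*} [Fintype κ] [DecidableEq κ]
    (s : Finset ι) (g : ι → κ) (a : ι → ℝ) (f : κ → ℝ) :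
    ∑ i ∈ s, a i * f (g i) = ∑ j, (∑ i ∈ s with g i = j, a i) * f j := by
  rw [← sum_fiberwise s g]
  refine sum_congr rfl fun j _ => ?_
  rw [sum_mul]
  exact sum_congr rfl fun i hi => by rw [(mem_filter.mp hi).2]

theorem sum_fiber_mul_log_div_le {ι κ : Type*} [Fintype κ] [DecidableEq κ]
    (s : Finset ι) (g : ι → κ) {a b : ι → ℝ} (ha : ∀ i ∈ s, 0 ≤ a i) (hb : ∀ i ∈ s, 0 < b i) :
    ∑ j, (∑ i ∈ s with g i = j, a i) *
        log ((∑ i ∈ s with g i = j, a i) / ∑ i ∈ s with g i = j, b i)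
      ≤ ∑ i ∈ s, a i * log (a i / b i) := by
  rw [← sum_fiberwise s g]
  exact sum_le_sum fun j _ => sum_mul_log_sum_div_sum_le _
    (fun i hi => ha i (mem_filter.mp hi).1) (fun i hi => hb i (mem_filter.mp hi).1)

-- No side conditions: for `c = 0` or `b = 0` both logarithms are `log 0 = 0`, as `x / 0 = 0`.
theorem mul_log_div_mul_div (a b c : ℝ) : a * log (a / (a * b / c)) = a * log (c / b) := by
  rcases eq_or_ne a 0 with rfl | ha
  · simp
  · rw [div_div_eq_mul_div, mul_div_mul_left _ _ ha]

theorem raked_measure_minimizes_relative_entropy_general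
    {𝒳 : Type*} {m : ℕ} (S : Finset 𝒳) (q : 𝒳 → ℝ)
    (idx : 𝒳 → Fin m) (pA : Fin m → ℝ)
    (hq : ∀ x ∈ S, 0 < q x)
    (r : 𝒳 → ℝ) (hr : ∀ x ∈ S, 0 < r x)
    (hmargins : ∀ j : Fin m, ∑ x ∈ S.filter (fun x => idx x = j), r x = pA j) :
    (∑ x ∈ S, q x *
        Real.log (q x /
          (q x * pA (idx x) / (∑ y ∈ S.filter (fun y => idx y = idx x), q y)))
      = ∑ j : Fin m, (∑ x ∈ S.filter (fun x => idx x = j), q x) *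
          Real.log ((∑ x ∈ S.filter (fun x => idx x = j), q x) / pA j))
    ∧ (∑ j : Fin m, (∑ x ∈ S.filter (fun x => idx x = j), q x) *
          Real.log ((∑ x ∈ S.filter (fun x => idx x = j), q x) / pA j))
        ≤ ∑ x ∈ S, q x * Real.log (q x / r x) := by
  constructor
  · simp only [mul_log_div_mul_div]
    exact sum_mul_comp_eq_sum_fiber_mul S idx q
      (fun j => log ((∑ x ∈ S with idx x = j, q x) / pA j))
  · simpa only [hmargins] using
      sum_fiber_mul_log_div_le S idx (fun x hx => (hq x hx).le) hr

/-- Among all probability measures `R` supported on `S` with the margin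
constraints `R(Aj) = P(Aj)`, the raked measure `Q'({x}) = q(x)·P(A_{idx x})/Q(A_{idx x})`
minimizes the relative entropy `d_K(Q || R)`; moreover
`d_K(Q || Q') = Σ_j Q(Aj) log(Q(Aj)/P(Aj))`. -/
theorem raked_measure_minimizes_relative_entropy
    {𝒳 : Type*} {m : ℕ} (S : Finset 𝒳) (q : 𝒳 → ℝ)
    (idx : 𝒳 → Fin m) (pA : Fin m → ℝ)
    (hq : ∀ x ∈ S, 0 < q x) (hqsum : ∑ x ∈ S, q x = 1)
    (hpA : ∀ j, 0 < pA j) (hpAsum : ∑ j, pA j = 1)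
    (hQA : ∀ j : Fin m, 0 < ∑ x ∈ S.filter (fun x => idx x = j), q x)
    (r : 𝒳 → ℝ) (hr : ∀ x ∈ S, 0 < r x) (hrsum : ∑ x ∈ S, r x = 1)
    (hmargins : ∀ j : Fin m, ∑ x ∈ S.filter (fun x => idx x = j), r x = pA j) :
    (∑ x ∈ S, q x *
        Real.log (q x /
          (q x * pA (idx x) / (∑ y ∈ S.filter (fun y => idx y = idx x), q y)))
      = ∑ j : Fin m, (∑ x ∈ S.filter (fun x => idx x = j), q x) *
          Real.log ((∑ x ∈ S.filter (fun x => idx x = j), q x) / pA j))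
    ∧ (∑ j : Fin m, (∑ x ∈ S.filter (fun x => idx x = j), q x) *
          Real.log ((∑ x ∈ S.filter (fun x => idx x = j), q x) / pA j))
        ≤ ∑ x ∈ S, q x * Real.log (q x / r x) :=
  raked_measure_minimizes_relative_entropy_general S q idx pA hq r hr hmargins
end

section
/- For the empirical raking-ratio process, the conditional-mixture identity holds: α_n^{(N)}(f) = Σ_{j=1}^{m_N} (P(A_j^{(N)}) / P_n^{(N-1)}(A_j^{(N)})) · α_n^{(N-1)}((f − E(f|A_j^{(N)}))·1_{A_j^{(N)}}), where α_n^{(k)}(f) = √n (P_n^{(k)}(f) − P(f)) and P_n^{(N)}(f) = Σ_j (P(A_j^{(N)})/P_n^{(N-1)}(A_j^{(N)})) P_n^{(N-1)}(f 1_{A_j^{(N)}}). -/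
/-!
Write `c_j = E(f | A_j)` for the `P`-average of `f` on `A_j` and `w_j = P(A_j) / μ(A_j)`.
Centring at the average kills the `P`-part of every block, and `w_j μ(A_j) c_j = P(f 1_{A_j})`
turns each remaining `μ`-part into `w_j μ(f 1_{A_j}) - P(f 1_{A_j})`. Since the blocks partition
the space, these last terms add up to `P(f)`.
-/

open MeasureTheory

namespace MeasureTheory

variable {α : Type*} [MeasurableSpace α] {μ ν : Measure α} {s : Set α} {f : α → ℝ}

theorem setAverage_eq_div (μ : Measure α) (f : α → ℝ) (s : Set α) :
    ⨍ x in s, f x ∂μ = (∫ x in s, f x ∂μ) / μ.real s := by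
  rw [setAverage_eq, smul_eq_mul, inv_mul_eq_div]

theorem div_mul_setIntegral_sub_setAverage (hf : IntegrableOn f s μ) (hμ : μ s ≠ 0)
    (hμ' : μ s ≠ ⊤) (hν : ν s ≠ ⊤) :
    ν.real s / μ.real s * ∫ x in s, f x - ⨍ y in s, f y ∂ν ∂μ
      = ν.real s / μ.real s * ∫ x in s, f x ∂μ - ∫ x in s, f x ∂ν := by
  have hμs : μ.real s ≠ 0 := ENNReal.toReal_ne_zero.mpr ⟨hμ, hμ'⟩
  rw [integral_sub hf (integrableOn_const hμ'), setIntegral_const, smul_eq_mul,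
    ← measure_smul_setAverage f hν, smul_eq_mul]
  field_simp

end MeasureTheory

theorem raking_ratio_conditional_mixture_identity_general
    {𝒳 : Type*} [MeasurableSpace 𝒳] (P μ : Measure 𝒳)
    [IsProbabilityMeasure P] [IsFiniteMeasure μ]
    {m : ℕ} (A : Fin m → Set 𝒳)
    (hmeas : ∀ j, MeasurableSet (A j))
    (hdisj : ∀ i j, i ≠ j → Disjoint (A i) (A j))
    (hcov : (⋃ j, A j) = Set.univ)
    (hμ : ∀ j, 0 < μ (A j))
    (n : ℕ) (f : 𝒳 → ℝ) (hf : Measurable f) (M : ℝ) (hbd : ∀ x, |f x| ≤ M) :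
    Real.sqrt n *
        ((∑ j : Fin m, (P (A j)).toReal / (μ (A j)).toReal * ∫ x in A j, f x ∂μ)
          - ∫ x, f x ∂P)
      = ∑ j : Fin m, (P (A j)).toReal / (μ (A j)).toReal *
          (Real.sqrt n *
            ((∫ x in A j, (f x - (∫ y in A j, f y ∂P) / (P (A j)).toReal) ∂μ)
              - ∫ x in A j, (f x - (∫ y in A j, f y ∂P) / (P (A j)).toReal) ∂P)) := by
  have hbound : ∀ ν : Measure 𝒳, ∀ᵐ x ∂ν, ‖f x‖ ≤ M := fun ν => .of_forall hbd
  have hfP : Integrable f P := .of_bound hf.aestronglyMeasurable M (hbound P)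
  have hfμ : Integrable f μ := .of_bound hf.aestronglyMeasurable M (hbound μ)
  have hpartition : ∑ j, ∫ x in A j, f x ∂P = ∫ x, f x ∂P := by
    rw [← integral_iUnion_fintype hmeas hdisj (fun j => hfP.integrableOn), hcov,
      setIntegral_univ]
  simp only [← measureReal_def, ← setAverage_eq_div, setAverage_sub_setAverage
    (measure_ne_top P _), sub_zero, mul_left_comm _ (Real.sqrt n), ← Finset.mul_sum,
    div_mul_setIntegral_sub_setAverage hfμ.integrableOn (hμ _).ne' (measure_ne_top μ _)
      (measure_ne_top P _)]
  rw [Finset.sum_sub_distrib, hpartition]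

/-- The conditional-mixture identity for one raking step:
`α_n^{(N)}(f) = Σ_j (P(Aj)/P_n^{(N-1)}(Aj)) · α_n^{(N-1)}((f − E(f|Aj))·1_{Aj})`,
where `μ` plays the role of `P_n^{(N-1)}` and `E(f|A) = P(f·1_A)/P(A)`. -/
theorem raking_ratio_conditional_mixture_identity
    {𝒳 : Type*} [MeasurableSpace 𝒳] (P μ : Measure 𝒳)
    [IsProbabilityMeasure P] [IsFiniteMeasure μ]
    {m : ℕ} (A : Fin m → Set 𝒳)
    (hmeas : ∀ j, MeasurableSet (A j))
    (hdisj : ∀ i j, i ≠ j → Disjoint (A i) (A j))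
    (hcov : (⋃ j, A j) = Set.univ)
    (hP : ∀ j, 0 < P (A j)) (hμ : ∀ j, 0 < μ (A j))
    (n : ℕ) (f : 𝒳 → ℝ) (hf : Measurable f) (M : ℝ) (hbd : ∀ x, |f x| ≤ M) :
    Real.sqrt n *
        ((∑ j : Fin m, (P (A j)).toReal / (μ (A j)).toReal * ∫ x in A j, f x ∂μ)
          - ∫ x, f x ∂P)
      = ∑ j : Fin m, (P (A j)).toReal / (μ (A j)).toReal *
          (Real.sqrt n *
            ((∫ x in A j, (f x - (∫ y in A j, f y ∂P) / (P (A j)).toReal) ∂μ)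
              - ∫ x in A j, (f x - (∫ y in A j, f y ∂P) / (P (A j)).toReal) ∂P)) :=
  raking_ratio_conditional_mixture_identity_general P μ A hmeas hdisj hcov hμ n f hf M hbd
end

section
/- With the recursive definition G^{(N)}(f) = G^{(N-1)}(f) − Σ_j E(f|A_j^{(N)}) G^{(N-1)}(A_j^{(N)}) and G^{(0)} a linear process, one has the closed form G^{(N)}(f) = G(f) − Σ_{k=1}^N (Φ_k^{(N)}(f))ᵗ · G[A^{(k)}], where Φ_k^{(N)}(f) = E[f|A^{(k)}] + Σ_{1≤L≤N−k, k<l_1<...<l_L≤N} (−1)^L P_{A^{(l_1)}|A^{(k)}} P_{A^{(l_2)}|A^{(l_1)}} ⋯ P_{A^{(l_L)}|A^{(l_{L−1})}} · E[f|A^{(l_L)}]. -/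
/-!
The coefficient vectors obey the same recursion as the process:
`Φ_k^{(N+1)}(f) = Φ_k^{(N)}(f) − Σ_j E(f|A_j^{(N+1)}) Φ_k^{(N)}(1_{A_j^{(N+1)}})` for `k ≤ N`,
and `Φ_{N+1}^{(N+1)}(f) = E[f|A^{(N+1)}]`; the closed form then follows by induction on `N`.
The recursion for `Φ` comes from splitting the chains in `{k+1, …, N+1}` according to whether
they end at `N+1`: for those that do, the last factor `P_{A^{(N+1)}|A^{(l_L)}} E[f|A^{(N+1)}]`
equals `Σ_j E(f|A_j^{(N+1)}) E[1_{A_j^{(N+1)}}|A^{(l_L)}]`, which is what turns such a chain of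
`f` into a chain of the indicators one step shorter.
-/

open MeasureTheory

/-- The vector `P_{A^{(l_1)}|A^{(k)}} P_{A^{(l_2)}|A^{(l_1)}} ⋯ P_{A^{(l_L)}|A^{(l_{L-1})}}
· E[f|A^{(l_L)}]` along a chain `[l_1,...,l_L]`, with the empty chain giving
`E[f|A^{(k)}]`. -/
noncomputable def chainVec {𝒳 : Type*} [MeasurableSpace 𝒳] (P : Measure 𝒳)
    (m : ℕ → ℕ) (A : (k : ℕ) → Fin (m k) → Set 𝒳) (f : 𝒳 → ℝ) :
    (k : ℕ) → List ℕ → Fin (m k) → ℝ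
  | k, [] => fun i => (∫ x in A k i, f x ∂P) / (P (A k i)).toReal
  | k, l :: rest => fun i =>
      ∑ j : Fin (m l),
        (P (A l j ∩ A k i)).toReal / (P (A k i)).toReal * chainVec P m A f l rest j

/-- `Φ_k^{(N)}(f) = E[f|A^{(k)}] + Σ_{1≤L≤N−k, k<l_1<...<l_L≤N} (−1)^L
P_{A^{(l_1)}|A^{(k)}} ⋯ P_{A^{(l_L)}|A^{(l_{L−1})}} · E[f|A^{(l_L)}]`, where the chains
`k < l_1 < ... < l_L ≤ N` are encoded as the nonempty subsets of `{k+1,...,N}`. -/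
noncomputable def Phi {𝒳 : Type*} [MeasurableSpace 𝒳] (P : Measure 𝒳)
    (m : ℕ → ℕ) (A : (k : ℕ) → Fin (m k) → Set 𝒳) (f : 𝒳 → ℝ)
    (N k : ℕ) : Fin (m k) → ℝ := fun i =>
  (∫ x in A k i, f x ∂P) / (P (A k i)).toReal +
    ∑ S ∈ (Finset.Icc (k + 1) N).powerset.filter (fun S => S.Nonempty),
      (-1 : ℝ) ^ S.card * chainVec P m A f k (S.sort (· ≤ ·)) i

/-- The recursively raked process
`G^{(N)}(f) = G^{(N-1)}(f) − Σ_j E(f|A_j^{(N)}) G^{(N-1)}(1_{A_j^{(N)}})`. -/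
noncomputable def rakeG {𝒳 : Type*} [MeasurableSpace 𝒳] (P : Measure 𝒳)
    (m : ℕ → ℕ) (A : (k : ℕ) → Fin (m k) → Set 𝒳)
    (G : (𝒳 → ℝ) → ℝ) : ℕ → (𝒳 → ℝ) → ℝ
  | 0 => G
  | N + 1 => fun f =>
      rakeG P m A G N f -
        ∑ j : Fin (m (N + 1)),
          ((∫ x in A (N + 1) j, f x ∂P) / (P (A (N + 1) j)).toReal) *
            rakeG P m A G N ((A (N + 1) j).indicator (1 : 𝒳 → ℝ))

theorem Finset.sort_insert_of_forall_le {α : Type*} [LinearOrder α] {a : α} {s : Finset α}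
    (h₁ : ∀ b ∈ s, b ≤ a) (h₂ : a ∉ s) :
    (insert a s).sort (· ≤ ·) = s.sort (· ≤ ·) ++ [a] := by
  have hnodup : (s.sort (· ≤ ·) ++ [a]).Nodup :=
    List.nodup_append.2 ⟨s.sort_nodup _, List.nodup_singleton a, by simpa using h₂⟩
  have hl : (s.sort (· ≤ ·) ++ [a]).toFinset = insert a s := by ext; simp
  rw [← hl, List.toFinset_sort _ hnodup]
  exact List.pairwise_append.2 ⟨s.pairwise_sort _, by simp, by simpa using h₁⟩

section

variable {𝒳 : Type*} [MeasurableSpace 𝒳] (P : Measure 𝒳)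

noncomputable def cellMean (s : Set 𝒳) (g : 𝒳 → ℝ) : ℝ :=
  (∫ x in s, g x ∂P) / (P s).toReal

theorem cellMean_indicator_one {s t : Set 𝒳} (ht : MeasurableSet t) :
    cellMean P s (t.indicator 1) = (P (t ∩ s)).toReal / (P s).toReal := by
  rw [cellMean, integral_indicator_one ht, measureReal_restrict_apply ht, measureReal_def]

variable (m : ℕ → ℕ) (A : (k : ℕ) → Fin (m k) → Set 𝒳)

theorem chainVec_nil (g : 𝒳 → ℝ) (k : ℕ) (i : Fin (m k)) :
    chainVec P m A g k [] i = cellMean P (A k i) g := rfl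

theorem rakeG_succ (G : (𝒳 → ℝ) → ℝ) (N : ℕ) (f : 𝒳 → ℝ) :
    rakeG P m A G (N + 1) f = rakeG P m A G N f -
      ∑ j, cellMean P (A (N + 1) j) f * rakeG P m A G N ((A (N + 1) j).indicator 1) := rfl

theorem chainVec_append_singleton {n : ℕ} (hmeas : ∀ j, MeasurableSet (A n j)) (g : 𝒳 → ℝ)
    (c : List ℕ) (k : ℕ) (i : Fin (m k)) :
    chainVec P m A g k (c ++ [n]) i =
      ∑ j, cellMean P (A n j) g * chainVec P m A ((A n j).indicator 1) k c i := by
  induction c generalizing k with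
  | nil =>
    simp only [List.nil_append, chainVec.eq_2, chainVec_nil, cellMean_indicator_one P (hmeas _)]
    exact Finset.sum_congr rfl fun _ _ => mul_comm _ _
  | cons l rest ih =>
    simp only [List.cons_append, chainVec, ih, Finset.mul_sum]
    rw [Finset.sum_comm]
    exact Finset.sum_congr rfl fun _ _ => Finset.sum_congr rfl fun _ _ => mul_left_comm _ _ _

theorem Phi_eq_sum_powerset (g : 𝒳 → ℝ) (N k : ℕ) (i : Fin (m k)) :
    Phi P m A g N k i = ∑ S ∈ (Finset.Icc (k + 1) N).powerset,
      (-1 : ℝ) ^ S.card * chainVec P m A g k (S.sort (· ≤ ·)) i := by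
  rw [← Finset.add_sum_erase _ _ (Finset.empty_mem_powerset _)]
  simp [Phi, Finset.nonempty_iff_ne_empty, Finset.filter_ne', chainVec]

theorem Phi_self (g : 𝒳 → ℝ) (N : ℕ) (j : Fin (m N)) :
    Phi P m A g N N j = cellMean P (A N j) g := by
  simp [Phi, cellMean, Finset.filter_singleton]

theorem Phi_succ {N : ℕ} (hmeas : ∀ j, MeasurableSet (A (N + 1) j)) (g : 𝒳 → ℝ) {k : ℕ}
    (hk : k ≤ N) (i : Fin (m k)) :
    Phi P m A g (N + 1) k i = Phi P m A g N k i -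
      ∑ j, cellMean P (A (N + 1) j) g * Phi P m A ((A (N + 1) j).indicator 1) N k i := by
  simp only [Phi_eq_sum_powerset]
  rw [← Finset.insert_Icc_right_eq_Icc_add_one (by omega), Finset.sum_powerset_insert (by simp)]
  have hinsert : ∀ T ∈ (Finset.Icc (k + 1) N).powerset,
      (-1 : ℝ) ^ (insert (N + 1) T).card * chainVec P m A g k ((insert (N + 1) T).sort (· ≤ ·)) i
        = -∑ j, cellMean P (A (N + 1) j) g *
            ((-1) ^ T.card * chainVec P m A ((A (N + 1) j).indicator 1) k (T.sort (· ≤ ·)) i) := by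
    intro T hT
    have hT_le : ∀ b ∈ T, b ≤ N := fun b hb => (Finset.mem_Icc.1 (Finset.mem_powerset.1 hT hb)).2
    have hNT : N + 1 ∉ T := fun h => by have := hT_le _ h; omega
    rw [Finset.card_insert_of_notMem hNT,
      Finset.sort_insert_of_forall_le (fun b hb => (hT_le b hb).trans N.le_succ) hNT,
      chainVec_append_singleton P m A hmeas, pow_succ, Finset.mul_sum, ← Finset.sum_neg_distrib]
    exact Finset.sum_congr rfl fun _ _ => by ring
  rw [Finset.sum_congr rfl hinsert, Finset.sum_neg_distrib, Finset.sum_comm, ← sub_eq_add_neg]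
  simp only [Finset.mul_sum]

end

theorem rakeG_closed_form_general
    {𝒳 : Type*} [MeasurableSpace 𝒳] (P : Measure 𝒳)
    (m : ℕ → ℕ) (A : (k : ℕ) → Fin (m k) → Set 𝒳)
    (hmeas : ∀ k j, MeasurableSet (A k j))
    (G : (𝒳 → ℝ) → ℝ)
    (f : 𝒳 → ℝ)
    (N : ℕ) :
    rakeG P m A G N f
      = G f - ∑ k ∈ Finset.Icc 1 N, ∑ i : Fin (m k),
          Phi P m A f N k i * G ((A k i).indicator (1 : 𝒳 → ℝ)) := by
  induction N generalizing f with
  | zero => simp [rakeG]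
  | succ N ih =>
    have hPhi : ∀ k ∈ Finset.Icc 1 N,
        ∑ i, Phi P m A f (N + 1) k i * G ((A k i).indicator 1)
          = ∑ i, Phi P m A f N k i * G ((A k i).indicator 1) -
              ∑ j, cellMean P (A (N + 1) j) f * ∑ i,
                Phi P m A ((A (N + 1) j).indicator 1) N k i * G ((A k i).indicator 1) := by
      intro k hk
      simp only [Phi_succ P m A (hmeas _) f (Finset.mem_Icc.1 hk).2, sub_mul,
        Finset.sum_sub_distrib, Finset.sum_mul, Finset.mul_sum, mul_assoc]
      rw [Finset.sum_comm]
    rw [rakeG_succ, ← Finset.insert_Icc_right_eq_Icc_add_one (by omega),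
      Finset.sum_insert (by simp), Finset.sum_congr rfl hPhi]
    simp only [ih, Phi_self, mul_sub, Finset.sum_sub_distrib, Finset.mul_sum]
    rw [Finset.sum_comm (s := Finset.Icc 1 N)]
    ring

/-- Closed form of the raked process:
`G^{(N)}(f) = G(f) − Σ_{k=1}^N (Φ_k^{(N)}(f))ᵗ · G[A^{(k)}]` for a linear process `G`. -/
theorem rakeG_closed_form
    {𝒳 : Type*} [MeasurableSpace 𝒳] (P : Measure 𝒳) [IsProbabilityMeasure P]
    (m : ℕ → ℕ) (A : (k : ℕ) → Fin (m k) → Set 𝒳)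
    (hmeas : ∀ k j, MeasurableSet (A k j))
    (hdisj : ∀ k, ∀ i j : Fin (m k), i ≠ j → Disjoint (A k i) (A k j))
    (hcov : ∀ k, (⋃ j, A k j) = Set.univ)
    (hP : ∀ k j, 0 < P (A k j))
    (G : (𝒳 → ℝ) → ℝ)
    (hGadd : ∀ f g : 𝒳 → ℝ, G (f + g) = G f + G g)
    (hGsmul : ∀ (c : ℝ) (f : 𝒳 → ℝ), G (c • f) = c * G f)
    (f : 𝒳 → ℝ) (hf : Integrable f P)
    (N : ℕ) :
    rakeG P m A G N f
      = G f - ∑ k ∈ Finset.Icc 1 N, ∑ i : Fin (m k),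
          Phi P m A f N k i * G ((A k i).indicator (1 : 𝒳 → ℝ)) :=
  rakeG_closed_form_general P m A hmeas G f N
end

section
/- (Variance reduction.) For every bounded measurable f and every N, V(G^{(N)}(f)) ≤ V(G^{(0)}(f)) = P(f²) − P(f)², since V(G^{(N)}(f)) = V(G(f)) − Σ_{k=1}^N (Φ_k^{(N)}(f))ᵗ · V(G[A^{(k)}]) · Φ_k^{(N)}(f) and each matrix V(G[A^{(k)}]) = diag(P(A^{(k)})) − P(A^{(k)})ᵗP(A^{(k)}) is positive semidefinite. -/
/-!
Since `G` is linear, `G^{(N)}(f) = G(f_N)`, where `f_N = rakeFun P m A N f` is obtained by raking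
`f` itself, and the covariance of `G` turns the claim into `Var_P(f_N) ≤ Var_P(f)`. Raking to depth
`N + 1` is raking to depth `N` applied to `f - Π f`, where `Π` averages over the cells of the
`(N + 1)`-st partition. As `f - Π f` is orthogonal to the cell-wise constant functions `1` and
`Π f`, we get `Var f = Var (f - Π f) + Var (Π f) ≥ Var (f - Π f)`, and induction on `N` concludes.
-/

open MeasureTheory

open ProbabilityTheory Function

section SetAverage

variable {α E : Type*} [MeasurableSpace α] [NormedAddCommGroup E] [NormedSpace ℝ E]
  (μ : Measure α)

lemma setAverage_add {s : Set α} {f g : α → E} (hf : IntegrableOn f s μ)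
    (hg : IntegrableOn g s μ) :
    ⨍ x in s, (f + g) x ∂μ = (⨍ x in s, f x ∂μ) + ⨍ x in s, g x ∂μ := by
  simp only [setAverage_eq, Pi.add_apply, integral_add hf hg, smul_add]

lemma setAverage_smul (s : Set α) (c : ℝ) (f : α → E) :
    ⨍ x in s, (c • f) x ∂μ = c • ⨍ x in s, f x ∂μ := by
  simp only [setAverage_eq, Pi.smul_apply, integral_smul, smul_comm c]

lemma setIntegral_div_eq_setAverage (s : Set α) (f : α → ℝ) :
    (∫ x in s, f x ∂μ) / (μ s).toReal = ⨍ x in s, f x ∂μ := by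
  rw [setAverage_eq, smul_eq_mul, inv_mul_eq_div, measureReal_def]

end SetAverage

section BoundedMeasurable

variable (𝒳 : Type*) [MeasurableSpace 𝒳]

def boundedMeasurable : Subalgebra ℝ (𝒳 → ℝ) where
  carrier := {f | Measurable f ∧ ∃ M, ∀ x, |f x| ≤ M}
  mul_mem' := by
    rintro f g ⟨hfm, Mf, hMf⟩ ⟨hgm, Mg, hMg⟩
    exact ⟨hfm.mul hgm, Mf * Mg, fun x => by
      rw [Pi.mul_apply, abs_mul]
      exact mul_le_mul (hMf x) (hMg x) (abs_nonneg _) ((abs_nonneg _).trans (hMf x))⟩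
  add_mem' := by
    rintro f g ⟨hfm, Mf, hMf⟩ ⟨hgm, Mg, hMg⟩
    exact ⟨hfm.add hgm, Mf + Mg, fun x => (abs_add_le _ _).trans (add_le_add (hMf x) (hMg x))⟩
  algebraMap_mem' c := ⟨measurable_const, |c|, fun _ => le_rfl⟩

variable {𝒳}

lemma indicator_one_mem_boundedMeasurable {s : Set 𝒳} (hs : MeasurableSet s) :
    s.indicator 1 ∈ boundedMeasurable 𝒳 :=
  ⟨measurable_one.indicator hs, 1, fun x => by
    by_cases hx : x ∈ s <;> simp [hx]⟩

lemma memLp_of_mem_boundedMeasurable (μ : Measure 𝒳) [IsFiniteMeasure μ] (p : ENNReal)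
    {f : 𝒳 → ℝ} (hf : f ∈ boundedMeasurable 𝒳) : MemLp f p μ :=
  let ⟨hfm, M, hM⟩ := hf
  .of_bound hfm.aestronglyMeasurable M (.of_forall hM)

lemma integrable_of_mem_boundedMeasurable (μ : Measure 𝒳) [IsFiniteMeasure μ]
    {f : 𝒳 → ℝ} (hf : f ∈ boundedMeasurable 𝒳) : Integrable f μ :=
  memLp_one_iff_integrable.mp (memLp_of_mem_boundedMeasurable μ 1 hf)

end BoundedMeasurable

section Partition

variable {𝒳 ι : Type*} [MeasurableSpace 𝒳] [Fintype ι] (P : Measure 𝒳) (A : ι → Set 𝒳)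

noncomputable def partitionAverage (f : 𝒳 → ℝ) : 𝒳 → ℝ :=
  ∑ i, (⨍ x in A i, f x ∂P) • (A i).indicator 1

variable {P A}

lemma partitionAverage_mem (hA : ∀ i, MeasurableSet (A i)) (f : 𝒳 → ℝ) :
    partitionAverage P A f ∈ boundedMeasurable 𝒳 :=
  Subalgebra.sum_mem _ fun i _ =>
    Subalgebra.smul_mem _ (indicator_one_mem_boundedMeasurable (hA i)) _

lemma partitionAverage_apply_of_mem (hdisj : Pairwise (Disjoint on A)) (f : 𝒳 → ℝ)
    {i : ι} {x : 𝒳} (hx : x ∈ A i) : partitionAverage P A f x = ⨍ y in A i, f y ∂P := by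
  rw [partitionAverage, Finset.sum_apply, Finset.sum_eq_single i]
  · simp [hx]
  · intro j _ hji
    simp [Set.indicator_of_notMem ((hdisj hji).notMem_of_mem_right hx)]
  · simp

lemma integral_eq_sum_setIntegral (hA : ∀ i, MeasurableSet (A i))
    (hdisj : Pairwise (Disjoint on A)) (hcov : ⋃ i, A i = Set.univ) {u : 𝒳 → ℝ}
    (hu : Integrable u P) : ∫ x, u x ∂P = ∑ i, ∫ x in A i, u x ∂P := by
  rw [← integral_iUnion_fintype hA hdisj fun i => hu.integrableOn, hcov, Measure.restrict_univ]

lemma integral_sub_partitionAverage_mul [IsFiniteMeasure P] (hA : ∀ i, MeasurableSet (A i))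
    (hdisj : Pairwise (Disjoint on A)) (hcov : ⋃ i, A i = Set.univ) {f g : 𝒳 → ℝ}
    (hf : f ∈ boundedMeasurable 𝒳) (hg : g ∈ boundedMeasurable 𝒳)
    (hg_const : ∀ i, ∃ c, ∀ x ∈ A i, g x = c) :
    ∫ x, (f x - partitionAverage P A f x) * g x ∂P = 0 := by
  have hint : Integrable (fun x => (f x - partitionAverage P A f x) * g x) P :=
    integrable_of_mem_boundedMeasurable P
      (Subalgebra.mul_mem _ (Subalgebra.sub_mem _ hf (partitionAverage_mem hA f)) hg)
  rw [integral_eq_sum_setIntegral hA hdisj hcov hint]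
  refine Finset.sum_eq_zero fun i _ => ?_
  obtain ⟨c, hc⟩ := hg_const i
  calc ∫ x in A i, (f x - partitionAverage P A f x) * g x ∂P
      = ∫ x in A i, (f x - ⨍ y in A i, f y ∂P) * c ∂P :=
        setIntegral_congr_fun (hA i) fun x hx => by
          rw [partitionAverage_apply_of_mem hdisj f hx, hc x hx]
    _ = 0 := by rw [integral_mul_const, setAverage_sub_setAverage (measure_ne_top P _), zero_mul]

lemma covariance_sub_partitionAverage [IsProbabilityMeasure P] (hA : ∀ i, MeasurableSet (A i))
    (hdisj : Pairwise (Disjoint on A)) (hcov : ⋃ i, A i = Set.univ) {f : 𝒳 → ℝ}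
    (hf : f ∈ boundedMeasurable 𝒳) :
    cov[f - partitionAverage P A f, partitionAverage P A f; P] = 0 := by
  have havg : partitionAverage P A f ∈ boundedMeasurable 𝒳 := partitionAverage_mem hA f
  have hmean : ∫ x, (f x - partitionAverage P A f x) ∂P = 0 := by
    simpa using integral_sub_partitionAverage_mul (P := P) hA hdisj hcov hf
      (Subalgebra.one_mem _) fun _ => ⟨1, fun _ _ => rfl⟩
  have horth := integral_sub_partitionAverage_mul (P := P) hA hdisj hcov hf havg
    fun i => ⟨_, fun _ => partitionAverage_apply_of_mem hdisj f⟩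
  rw [covariance_eq_sub (memLp_of_mem_boundedMeasurable P 2 (Subalgebra.sub_mem _ hf havg))
    (memLp_of_mem_boundedMeasurable P 2 havg)]
  simp only [Pi.mul_apply, Pi.sub_apply, horth, hmean, zero_mul, sub_zero]

lemma variance_sub_partitionAverage_le [IsProbabilityMeasure P] (hA : ∀ i, MeasurableSet (A i))
    (hdisj : Pairwise (Disjoint on A)) (hcov : ⋃ i, A i = Set.univ) {f : 𝒳 → ℝ}
    (hf : f ∈ boundedMeasurable 𝒳) :
    Var[f - partitionAverage P A f; P] ≤ Var[f; P] := by
  have havg : partitionAverage P A f ∈ boundedMeasurable 𝒳 := partitionAverage_mem hA f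
  have hdecomp := variance_add (μ := P)
    (memLp_of_mem_boundedMeasurable P 2 (Subalgebra.sub_mem _ hf havg))
    (memLp_of_mem_boundedMeasurable P 2 havg)
  rw [sub_add_cancel, covariance_sub_partitionAverage hA hdisj hcov hf] at hdecomp
  linarith [variance_nonneg (partitionAverage P A f) P]

end Partition

section Raking

variable {𝒳 : Type*} [MeasurableSpace 𝒳] (P : Measure 𝒳) (m : ℕ → ℕ)
  (A : (k : ℕ) → Fin (m k) → Set 𝒳)

noncomputable def rakeFun : ℕ → (𝒳 → ℝ) → 𝒳 → ℝ
  | 0, f => f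
  | N + 1, f =>
      rakeFun N f -
        ∑ j, (⨍ x in A (N + 1) j, f x ∂P) • rakeFun N ((A (N + 1) j).indicator 1)

lemma rakeG_eq_rakeFun (L : (𝒳 → ℝ) →ₗ[ℝ] ℝ) (N : ℕ) (f : 𝒳 → ℝ) :
    rakeG P m A L N f = L (rakeFun P m A N f) := by
  induction N generalizing f with
  | zero => rfl
  | succ N ih =>
    simp only [rakeG, rakeFun, map_sub, map_sum, map_smul, smul_eq_mul, ih,
      setIntegral_div_eq_setAverage]

lemma rakeFun_mem (hA : ∀ k j, MeasurableSet (A k j)) (N : ℕ) {f : 𝒳 → ℝ}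
    (hf : f ∈ boundedMeasurable 𝒳) : rakeFun P m A N f ∈ boundedMeasurable 𝒳 := by
  induction N generalizing f with
  | zero => exact hf
  | succ N ih =>
    exact Subalgebra.sub_mem _ (ih hf) (Subalgebra.sum_mem _ fun j _ =>
      Subalgebra.smul_mem _ (ih (indicator_one_mem_boundedMeasurable (hA _ j))) _)

lemma rakeFun_add (N : ℕ) {f g : 𝒳 → ℝ} (hf : Integrable f P) (hg : Integrable g P) :
    rakeFun P m A N (f + g) = rakeFun P m A N f + rakeFun P m A N g := by
  induction N generalizing f g with
  | zero => rfl
  | succ N ih =>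
    simp only [rakeFun, ih hf hg, setAverage_add P hf.integrableOn hg.integrableOn, add_smul,
      Finset.sum_add_distrib]
    abel

lemma rakeFun_smul (N : ℕ) (c : ℝ) (f : 𝒳 → ℝ) :
    rakeFun P m A N (c • f) = c • rakeFun P m A N f := by
  induction N generalizing f with
  | zero => rfl
  | succ N ih =>
    simp only [rakeFun, ih, setAverage_smul, smul_sub, Finset.smul_sum, smul_smul, smul_eq_mul]

noncomputable def rakeFunLinear [IsFiniteMeasure P] (N : ℕ) :
    boundedMeasurable 𝒳 →ₗ[ℝ] 𝒳 → ℝ where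
  toFun f := rakeFun P m A N f
  map_add' f g := rakeFun_add P m A N (integrable_of_mem_boundedMeasurable P f.2)
    (integrable_of_mem_boundedMeasurable P g.2)
  map_smul' c f := rakeFun_smul P m A N c f

lemma rakeFun_succ [IsFiniteMeasure P] (hA : ∀ k j, MeasurableSet (A k j)) (N : ℕ)
    {f : 𝒳 → ℝ} (hf : f ∈ boundedMeasurable 𝒳) :
    rakeFun P m A (N + 1) f = rakeFun P m A N (f - partitionAverage P (A (N + 1)) f) := by
  have hind : ∀ j, (A (N + 1) j).indicator 1 ∈ boundedMeasurable 𝒳 :=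
    fun j => indicator_one_mem_boundedMeasurable (hA _ j)
  have hcoe : f - partitionAverage P (A (N + 1)) f = ↑(⟨f, hf⟩ -
      ∑ j, (⨍ x in A (N + 1) j, f x ∂P) • ⟨_, hind j⟩ : boundedMeasurable 𝒳) := by
    simp [partitionAverage]
  rw [hcoe]
  change _ = rakeFunLinear P m A N _
  simp only [map_sub, map_sum, map_smul]
  rfl

lemma variance_rakeFun_le [IsProbabilityMeasure P] (hA : ∀ k j, MeasurableSet (A k j))
    (hdisj : ∀ k, Pairwise (Disjoint on A k)) (hcov : ∀ k, ⋃ j, A k j = Set.univ) (N : ℕ)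
    {f : 𝒳 → ℝ} (hf : f ∈ boundedMeasurable 𝒳) : Var[rakeFun P m A N f; P] ≤ Var[f; P] := by
  induction N generalizing f with
  | zero => rfl
  | succ N ih =>
    rw [rakeFun_succ P m A hA N hf]
    exact (ih (Subalgebra.sub_mem _ hf (partitionAverage_mem (hA _) f))).trans
      (variance_sub_partitionAverage_le (hA _) (hdisj _) (hcov _) hf)

end Raking

theorem rakeG_variance_reduction_general
    {𝒳 Ω : Type*} [MeasurableSpace 𝒳] [MeasurableSpace Ω]
    (P : Measure 𝒳) (μ : Measure Ω)
    [IsProbabilityMeasure P]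
    (m : ℕ → ℕ) (A : (k : ℕ) → Fin (m k) → Set 𝒳)
    (hmeas : ∀ k j, MeasurableSet (A k j))
    (hdisj : ∀ k, ∀ i j : Fin (m k), i ≠ j → Disjoint (A k i) (A k j))
    (hcov : ∀ k, (⋃ j, A k j) = Set.univ)
    (G : (𝒳 → ℝ) → Ω → ℝ)
    (hGadd : ∀ (f g : 𝒳 → ℝ) (ω : Ω), G (f + g) ω = G f ω + G g ω)
    (hGsmul : ∀ (c : ℝ) (f : 𝒳 → ℝ) (ω : Ω), G (c • f) ω = c * G f ω)
    (hGcov : ∀ f g : 𝒳 → ℝ, Measurable f → Measurable g →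
      (∃ M, ∀ x, |f x| ≤ M) → (∃ M, ∀ x, |g x| ≤ M) →
      ∫ ω, G f ω * G g ω ∂μ
        = (∫ x, f x * g x ∂P) - (∫ x, f x ∂P) * (∫ x, g x ∂P))
    (N : ℕ) (f : 𝒳 → ℝ)
    (hmf : Measurable f) (hbf : ∃ M, ∀ x, |f x| ≤ M) :
    (∫ ω, (rakeG P m A (fun h => G h ω) N f) ^ 2 ∂μ ≤ ∫ ω, (G f ω) ^ 2 ∂μ)
      ∧ ∫ ω, (G f ω) ^ 2 ∂μ = (∫ x, f x ^ 2 ∂P) - (∫ x, f x ∂P) ^ 2 := by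
  have hf : f ∈ boundedMeasurable 𝒳 := ⟨hmf, hbf⟩
  have hsq : ∀ g ∈ boundedMeasurable 𝒳,
      ∫ ω, G g ω ^ 2 ∂μ = (∫ x, g x ^ 2 ∂P) - (∫ x, g x ∂P) ^ 2 := by
    rintro g ⟨hgm, hgb⟩
    simpa only [sq] using hGcov g g hgm hgm hgb hgb
  have hvar : ∀ g ∈ boundedMeasurable 𝒳, ∫ ω, G g ω ^ 2 ∂μ = Var[g; P] := fun g hg => by
    rw [hsq g hg, variance_eq_sub (memLp_of_mem_boundedMeasurable P 2 hg)]
    rfl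
  have hrake : ∀ ω, rakeG P m A (fun h => G h ω) N f = G (rakeFun P m A N f) ω := fun ω =>
    rakeG_eq_rakeFun P m A (IsLinearMap.mk' _ ⟨(hGadd · · ω), (hGsmul · · ω)⟩) N f
  refine ⟨?_, hsq f hf⟩
  simp only [hrake, hvar f hf, hvar _ (rakeFun_mem P m A hmeas N hf)]
  exact variance_rakeFun_le P m A hmeas hdisj hcov N hf

/-- Variance reduction: for every bounded measurable `f` and every `N`,
`V(G^{(N)}(f)) ≤ V(G^{(0)}(f)) = P(f²) − P(f)²`. -/
theorem rakeG_variance_reduction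
    {𝒳 Ω : Type*} [MeasurableSpace 𝒳] [MeasurableSpace Ω]
    (P : Measure 𝒳) (μ : Measure Ω)
    [IsProbabilityMeasure P] [IsProbabilityMeasure μ]
    (m : ℕ → ℕ) (A : (k : ℕ) → Fin (m k) → Set 𝒳)
    (hmeas : ∀ k j, MeasurableSet (A k j))
    (hdisj : ∀ k, ∀ i j : Fin (m k), i ≠ j → Disjoint (A k i) (A k j))
    (hcov : ∀ k, (⋃ j, A k j) = Set.univ)
    (hP : ∀ k j, 0 < P (A k j))
    (G : (𝒳 → ℝ) → Ω → ℝ)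
    (hGadd : ∀ (f g : 𝒳 → ℝ) (ω : Ω), G (f + g) ω = G f ω + G g ω)
    (hGsmul : ∀ (c : ℝ) (f : 𝒳 → ℝ) (ω : Ω), G (c • f) ω = c * G f ω)
    (hGcent : ∀ f : 𝒳 → ℝ, ∫ ω, G f ω ∂μ = 0)
    (hGint : ∀ f g : 𝒳 → ℝ, Integrable (fun ω => G f ω * G g ω) μ)
    (hGcov : ∀ f g : 𝒳 → ℝ, Measurable f → Measurable g →
      (∃ M, ∀ x, |f x| ≤ M) → (∃ M, ∀ x, |g x| ≤ M) →
      ∫ ω, G f ω * G g ω ∂μ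
        = (∫ x, f x * g x ∂P) - (∫ x, f x ∂P) * (∫ x, g x ∂P))
    (N : ℕ) (f : 𝒳 → ℝ)
    (hmf : Measurable f) (hbf : ∃ M, ∀ x, |f x| ≤ M) :
    (∫ ω, (rakeG P m A (fun h => G h ω) N f) ^ 2 ∂μ ≤ ∫ ω, (G f ω) ^ 2 ∂μ)
      ∧ ∫ ω, (G f ω) ^ 2 ∂μ = (∫ x, f x ^ 2 ∂P) - (∫ x, f x ∂P) ^ 2 :=
  rakeG_variance_reduction_general P μ m A hmeas hdisj hcov G hGadd hGsmul hGcov N f hmf hbf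
end
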